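/- arXiv:2211.07166 — 8 statements merged into one kernel-verified Lean document; each statement's English description precedes it below -/
import Mathlib

section
/- For every fixed integer q ≥ 2 and real p ∈ (0,1), the privacy budget estimate is strictly decreasing in the Binomial trial number: for all integers 1 ≤ n < n', ε(q,n',p) < ε(q,n,p). -/
noncomputable def alphaC : ℝ := -3 - 9 * Real.log (2 / 3)

noncomputable def Delta1 (d : ℕ) (δ q : ℝ) : ℝ :=
  Real.sqrt d * (q - 1) + Real.sqrt (2 * Real.sqrt d * (q - 1) * Real.log (2 / δ)) +
    (4 / 3) * Real.log (2 / δ)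

noncomputable def Delta2 (d : ℕ) (δ q : ℝ) : ℝ :=
  (q - 1) + Real.sqrt (Delta1 d δ q + Real.sqrt (2 * Real.sqrt d * (q - 1) * Real.log (2 / δ)))

def DeltaInf (q : ℝ) : ℝ := q + 1

noncomputable def S1 (n p : ℝ) : ℝ :=
  ((3 * p ^ 2 - 3 * p + 1) / (n * (n + 1) * (n + 2) * p ^ 2 * (1 - p) ^ 2)) *
    (3 * n + 2 + 2 / (p * (1 - p)))

noncomputable def S2 (d : ℕ) (δ n p : ℝ) : ℝ :=
  (Real.sqrt (2 * n * p * (1 - p) * Real.log (20 * d / δ)) + 1 +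
    (2 / 3) * max p (1 - p) * Real.log (20 * d / δ)) ^ 2

/-- The privacy budget estimate ε(q, n, p). -/
noncomputable def eps (d : ℕ) (δ q n p : ℝ) : ℝ :=
  Delta2 d δ q * Real.sqrt (2 * Real.log (1.25 / δ)) / Real.sqrt (n * p * (1 - p)) +
  alphaC * Delta1 d δ q * (n * p * (1 - p) + 1) * (p ^ 2 + (1 - p) ^ 2) /
    (n ^ 2 * p ^ 2 * (1 - p) ^ 2 * (1 - δ / 10)) +
  (Delta2 d δ q / Real.sqrt (1 - δ / 10)) * Real.sqrt (2 * S1 n p * Real.log (10 / δ)) +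
  (2 / 3) * alphaC * S2 d δ n p * (p ^ 2 + (1 - p) ^ 2) * Real.log (10 / δ) * DeltaInf q /
    (n ^ 2 * p ^ 2 * (1 - p) ^ 2) +
  2 * Real.log (1.25 / δ) * DeltaInf q / (n * p * (1 - p))

set_option maxHeartbeats 4000000

/-- the privacy budget estimate is strictly decreasing in n. -/
theorem eps_strictAnti_in_n (d : ℕ) (hd : 1 ≤ d) (δ : ℝ) (hδ : δ ∈ Set.Ioo (0 : ℝ) 1)
    (q : ℤ) (hq : 2 ≤ q) (p : ℝ) (hp : p ∈ Set.Ioo (0 : ℝ) 1)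
    (n n' : ℤ) (hn : 1 ≤ n) (hnn' : n < n') :
    eps d δ (q : ℝ) (n' : ℝ) p < eps d δ (q : ℝ) (n : ℝ) p := by
  obtain ⟨hδ0, hδ1⟩ := hδ
  obtain ⟨hp0, hp1⟩ := hp
  have h1p : 0 < 1 - p := by linarith
  have hq2 : (2:ℝ) ≤ (q:ℝ) := by exact_mod_cast hq
  have hx1 : (1:ℝ) ≤ (n:ℝ) := by exact_mod_cast hn
  have hxy : (n:ℝ) < (n':ℝ) := by exact_mod_cast hnn'
  set x := (n:ℝ) with hxdef
  set y := (n':ℝ) with hydef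
  have hx0 : 0 < x := by linarith
  have hy0 : 0 < y := by linarith
  have hc : 0 < p * (1 - p) := mul_pos hp0 h1p
  have hdR : (1:ℝ) ≤ (d:ℝ) := by exact_mod_cast hd
  have hd1 : (1:ℝ) ≤ Real.sqrt d := by
    rw [show (1:ℝ) = Real.sqrt 1 from Real.sqrt_one.symm]
    exact Real.sqrt_le_sqrt hdR
  -- logs
  have hL125 : 0 < Real.log (1.25 / δ) := Real.log_pos (by rw [lt_div_iff₀ hδ0]; linarith)
  have hL10 : 0 < Real.log (10 / δ) := Real.log_pos (by rw [lt_div_iff₀ hδ0]; linarith)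
  have hL2 : 0 < Real.log (2 / δ) := Real.log_pos (by rw [lt_div_iff₀ hδ0]; linarith)
  have hL20 : 0 ≤ Real.log (20 * d / δ) := Real.log_nonneg (by rw [le_div_iff₀ hδ0]; nlinarith)
  -- alphaC > 0
  have hexp3 : Real.exp (1/3 : ℝ) ^ (3:ℕ) = Real.exp 1 := by
    rw [← Real.exp_nat_mul]; norm_num
  have h32 : Real.exp (1/3 : ℝ) < 3/2 := by
    nlinarith [Real.exp_one_lt_d9, Real.exp_pos (1/3:ℝ), hexp3,
      sq_nonneg (Real.exp (1/3:ℝ)), sq_nonneg (Real.exp (1/3:ℝ) - 3/2)]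
  have hα : 0 < alphaC := by
    unfold alphaC
    have hlog : Real.log (2/3) < -(1/3) := by
      rw [show (2:ℝ)/3 = (3/2)⁻¹ by norm_num, Real.log_inv]
      have : (1:ℝ)/3 < Real.log (3/2) := (Real.lt_log_iff_exp_lt (by norm_num)).mpr h32
      linarith
    linarith
  have hΔ1 : 0 < Delta1 d δ q := by
    unfold Delta1
    have h1 : 0 ≤ Real.sqrt (2 * Real.sqrt d * ((q:ℝ) - 1) * Real.log (2/δ)) :=
      Real.sqrt_nonneg _
    nlinarith [hd1, hL2, hq2]
  have hΔ2 : 0 < Delta2 d δ q := by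
    unfold Delta2
    have h1 : 0 ≤ Real.sqrt (Delta1 d δ q +
        Real.sqrt (2 * Real.sqrt d * ((q:ℝ) - 1) * Real.log (2/δ))) := Real.sqrt_nonneg _
    linarith
  have hs : 0 < p ^ 2 + (1 - p) ^ 2 := by positivity
  have hN : 0 < 3 * p ^ 2 - 3 * p + 1 := by nlinarith [sq_nonneg (2*p - 1)]
  have hD10 : 0 < 1 - δ / 10 := by linarith
  have hDinf : 0 < DeltaInf (q:ℝ) := by unfold DeltaInf; linarith
  have hxc : 0 < x * p * (1 - p) := mul_pos (mul_pos hx0 hp0) h1p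
  have hyc : 0 < y * p * (1 - p) := mul_pos (mul_pos hy0 hp0) h1p
  -- Term 1
  have h1 : Delta2 d δ q * Real.sqrt (2 * Real.log (1.25 / δ)) / Real.sqrt (y * p * (1 - p)) <
      Delta2 d δ q * Real.sqrt (2 * Real.log (1.25 / δ)) / Real.sqrt (x * p * (1 - p)) := by
    apply div_lt_div_of_pos_left
    · exact mul_pos hΔ2 (Real.sqrt_pos.mpr (by linarith))
    · exact Real.sqrt_pos.mpr hxc
    · exact Real.sqrt_lt_sqrt hxc.le (by nlinarith)
  -- Term 2
  have key2 : (y * p * (1 - p) + 1) * x ^ 2 < (x * p * (1 - p) + 1) * y ^ 2 := by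
    nlinarith [mul_pos hc (mul_pos (mul_pos hx0 hy0) (sub_pos.mpr hxy)),
      mul_pos (sub_pos.mpr hxy) (show (0:ℝ) < x + y by linarith)]
  have hdy2 : 0 < y ^ 2 * p ^ 2 * (1 - p) ^ 2 * (1 - δ / 10) :=
    mul_pos (mul_pos (mul_pos (pow_pos hy0 2) (pow_pos hp0 2)) (pow_pos h1p 2)) hD10
  have hdx2 : 0 < x ^ 2 * p ^ 2 * (1 - p) ^ 2 * (1 - δ / 10) :=
    mul_pos (mul_pos (mul_pos (pow_pos hx0 2) (pow_pos hp0 2)) (pow_pos h1p 2)) hD10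
  have h2 : alphaC * Delta1 d δ q * (y * p * (1 - p) + 1) * (p ^ 2 + (1 - p) ^ 2) /
      (y ^ 2 * p ^ 2 * (1 - p) ^ 2 * (1 - δ / 10)) <
      alphaC * Delta1 d δ q * (x * p * (1 - p) + 1) * (p ^ 2 + (1 - p) ^ 2) /
      (x ^ 2 * p ^ 2 * (1 - p) ^ 2 * (1 - δ / 10)) := by
    rw [div_lt_div_iff₀ hdy2 hdx2]
    have hM : 0 < alphaC * Delta1 d δ q * (p ^ 2 + (1 - p) ^ 2) *
        (p ^ 2 * (1 - p) ^ 2 * (1 - δ / 10)) :=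
      mul_pos (mul_pos (mul_pos hα hΔ1) hs)
        (mul_pos (mul_pos (pow_pos hp0 2) (pow_pos h1p 2)) hD10)
    linarith [mul_lt_mul_of_pos_left key2 hM]
  -- Term 3
  have hu : 0 < 2 / (p * (1 - p)) := by positivity
  have hPy : 0 < y * (y + 1) * (y + 2) * p ^ 2 * (1 - p) ^ 2 :=
    mul_pos (mul_pos (mul_pos (mul_pos hy0 (by linarith)) (by linarith)) (pow_pos hp0 2))
      (pow_pos h1p 2)
  have hPx : 0 < x * (x + 1) * (x + 2) * p ^ 2 * (1 - p) ^ 2 :=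
    mul_pos (mul_pos (mul_pos (mul_pos hx0 (by linarith)) (by linarith)) (pow_pos hp0 2))
      (pow_pos h1p 2)
  have keyS1 : S1 y p < S1 x p := by
    unfold S1
    rw [div_mul_eq_mul_div, div_mul_eq_mul_div, div_lt_div_iff₀ hPy hPx]
    have h1c : (0:ℝ) < y - x := by linarith
    have h2c : (0:ℝ) < y ^ 2 - x ^ 2 := by nlinarith
    have h3c : (0:ℝ) < y ^ 3 - x ^ 3 := by nlinarith
    have kk : (3 * y + 2 + 2 / (p * (1 - p))) * (x * (x + 1) * (x + 2)) <
        (3 * x + 2 + 2 / (p * (1 - p))) * (y * (y + 1) * (y + 2)) := by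
      linarith [mul_pos (mul_pos hx0 hy0) h2c, mul_pos (mul_pos hx0 hy0) h1c,
        mul_pos hu h3c, mul_pos hu h2c, mul_pos hu h1c, h1c, h2c, h3c]
    have hMc : 0 < (3 * p ^ 2 - 3 * p + 1) * (p ^ 2 * (1 - p) ^ 2) :=
      mul_pos hN (mul_pos (pow_pos hp0 2) (pow_pos h1p 2))
    linarith [mul_lt_mul_of_pos_left kk hMc]
  have hS1y : 0 ≤ S1 y p := by
    unfold S1
    apply mul_nonneg (div_nonneg hN.le hPy.le)
    nlinarith [hu]
  have h3 : Delta2 d δ q / Real.sqrt (1 - δ / 10) *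
      Real.sqrt (2 * S1 y p * Real.log (10 / δ)) <
      Delta2 d δ q / Real.sqrt (1 - δ / 10) *
      Real.sqrt (2 * S1 x p * Real.log (10 / δ)) := by
    apply mul_lt_mul_of_pos_left _ (div_pos hΔ2 (Real.sqrt_pos.mpr hD10))
    apply Real.sqrt_lt_sqrt (by positivity)
    linarith [mul_lt_mul_of_pos_right keyS1 hL10]
  -- Term 4
  have hm : 0 ≤ 2 / 3 * max p (1 - p) * Real.log (20 * d / δ) :=
    mul_nonneg (mul_nonneg (by norm_num) (le_trans hp0.le (le_max_left _ _))) hL20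
  have key4 : S2 d δ y p * x ^ 2 < S2 d δ x p * y ^ 2 := by
    unfold S2
    rw [← mul_pow, ← mul_pow]
    have hby : 0 ≤ (Real.sqrt (2 * y * p * (1 - p) * Real.log (20 * d / δ)) + 1 +
        2 / 3 * max p (1 - p) * Real.log (20 * d / δ)) * x :=
      mul_nonneg (by positivity) hx0.le
    apply pow_lt_pow_left₀ _ hby (two_ne_zero)
    have e1 : Real.sqrt (2 * y * p * (1 - p) * Real.log (20 * d / δ)) * x =
        Real.sqrt (2 * y * p * (1 - p) * Real.log (20 * d / δ) * x ^ 2) := by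
      rw [Real.sqrt_mul (by nlinarith [hL20, hyc] : (0:ℝ) ≤ 2 * y * p * (1 - p) * Real.log (20 * d / δ)),
        Real.sqrt_sq hx0.le]
    have e2 : Real.sqrt (2 * x * p * (1 - p) * Real.log (20 * d / δ)) * y =
        Real.sqrt (2 * x * p * (1 - p) * Real.log (20 * d / δ) * y ^ 2) := by
      rw [Real.sqrt_mul (by nlinarith [hL20, hxc] : (0:ℝ) ≤ 2 * x * p * (1 - p) * Real.log (20 * d / δ)),
        Real.sqrt_sq hy0.le]
    have e3 : Real.sqrt (2 * y * p * (1 - p) * Real.log (20 * d / δ) * x ^ 2) ≤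
        Real.sqrt (2 * x * p * (1 - p) * Real.log (20 * d / δ) * y ^ 2) := by
      apply Real.sqrt_le_sqrt
      nlinarith [mul_nonneg (mul_nonneg (mul_nonneg hc.le hL20)
        (mul_pos hx0 hy0).le) (sub_pos.mpr hxy).le]
    have e4 : 2 / 3 * max p (1 - p) * Real.log (20 * d / δ) * x ≤
        2 / 3 * max p (1 - p) * Real.log (20 * d / δ) * y :=
      mul_le_mul_of_nonneg_left hxy.le hm
    linarith [e1, e2, e3, e4, hxy]
  have hdy4 : 0 < y ^ 2 * p ^ 2 * (1 - p) ^ 2 :=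
    mul_pos (mul_pos (pow_pos hy0 2) (pow_pos hp0 2)) (pow_pos h1p 2)
  have hdx4 : 0 < x ^ 2 * p ^ 2 * (1 - p) ^ 2 :=
    mul_pos (mul_pos (pow_pos hx0 2) (pow_pos hp0 2)) (pow_pos h1p 2)
  have h4 : 2 / 3 * alphaC * S2 d δ y p * (p ^ 2 + (1 - p) ^ 2) * Real.log (10 / δ) *
      DeltaInf (q:ℝ) / (y ^ 2 * p ^ 2 * (1 - p) ^ 2) <
      2 / 3 * alphaC * S2 d δ x p * (p ^ 2 + (1 - p) ^ 2) * Real.log (10 / δ) *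
      DeltaInf (q:ℝ) / (x ^ 2 * p ^ 2 * (1 - p) ^ 2) := by
    rw [div_lt_div_iff₀ hdy4 hdx4]
    have hM : 0 < 2 / 3 * alphaC * (p ^ 2 + (1 - p) ^ 2) * Real.log (10 / δ) *
        DeltaInf (q:ℝ) * (p ^ 2 * (1 - p) ^ 2) :=
      mul_pos (mul_pos (mul_pos (mul_pos (mul_pos (by norm_num) hα) hs) hL10) hDinf)
        (mul_pos (pow_pos hp0 2) (pow_pos h1p 2))
    linarith [mul_lt_mul_of_pos_left key4 hM]
  -- Term 5
  have h5 : 2 * Real.log (1.25 / δ) * DeltaInf (q:ℝ) / (y * p * (1 - p)) <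
      2 * Real.log (1.25 / δ) * DeltaInf (q:ℝ) / (x * p * (1 - p)) := by
    apply div_lt_div_of_pos_left
    · exact mul_pos (mul_pos (by norm_num) hL125) hDinf
    · exact hxc
    · nlinarith
  unfold eps
  linarith [h1, h2, h3, h4, h5]
end

section
/- For every fixed integer q ≥ 2 and integer n ≥ 1, the privacy budget estimate is strictly increasing in p on [1/2, 1): for all reals p, p' with 1/2 ≤ p < p' < 1, ε(q,n,p) < ε(q,n,p'). -/
lemma alphaC_pos : 0 < alphaC := by
  unfold alphaC
  have h : Real.log (2/3) = - Real.log (3/2) := by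
    rw [← Real.log_inv]; norm_num
  rw [h]
  have h3 : (1:ℝ) < Real.log ((3/2:ℝ)^3) := by
    rw [Real.lt_log_iff_exp_lt (by norm_num)]
    have := Real.exp_one_lt_d9
    norm_num; linarith
  rw [Real.log_pow] at h3
  push_cast at h3
  linarith

lemma core2 (n a b : ℝ) (hn : 1 ≤ n) (hb : 0 < b) (hba : b < a) (ha4 : a ≤ 1/4) :
    (n*a+1)*(1-2*a)/a^2 ≤ (n*b+1)*(1-2*b)/b^2 := by
  have ha : 0 < a := hb.trans hba
  have hab : 0 < a*b := mul_pos ha hb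
  have h1 : a*b ≤ n*(a*b) := le_mul_of_one_le_left hab.le hn
  have h2 : 2*a*b ≤ a/2 := by nlinarith [mul_le_mul_of_nonneg_left (hba.le.trans ha4) ha.le]
  have hfac : (0:ℝ) ≤ n*a*b + a + b - 2*a*b := by nlinarith
  rw [div_le_div_iff₀ (by positivity) (by positivity)]
  nlinarith [mul_nonneg (sub_pos.2 hba).le hfac]

lemma core3 (m a b : ℝ) (hm : 5 ≤ m) (hb : 0 < b) (hba : b < a) (ha4 : a ≤ 1/4) :
    (1-3*a)*(m*a+2)/a^3 ≤ (1-3*b)*(m*b+2)/b^3 := by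
  have ha : 0 < a := hb.trans hba
  have hab : 0 < a*b := mul_pos ha hb
  have hX : 0 ≤ a*b*(a+b-3*a*b) := by
    have : a*b ≤ (1/4)*b := mul_le_mul_of_nonneg_right ha4 hb.le
    nlinarith
  have hY : 0 ≤ 2*(a^2+a*b+b^2) - 6*a*b*(a+b) := by
    have h5 : 6*(a*b)*(a+b) ≤ 6*(a*b)*(1/2) := by
      apply mul_le_mul_of_nonneg_left (by linarith) (by positivity)
    nlinarith [sq_nonneg (a-b)]
  have hfac : (0:ℝ) ≤ m*(a*b*(a+b-3*a*b)) + (2*(a^2+a*b+b^2) - 6*a*b*(a+b)) := by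
    nlinarith [mul_le_mul_of_nonneg_right hm hX]
  rw [div_le_div_iff₀ (by positivity) (by positivity)]
  nlinarith [mul_nonneg (sub_pos.2 hba).le hfac]

lemma sqrt_mul_div (c a : ℝ) (hc : 0 ≤ c) (ha : 0 < a) :
    Real.sqrt (c*a)/a = Real.sqrt c / Real.sqrt a := by
  rw [Real.sqrt_mul hc a, div_eq_div_iff ha.ne' (Real.sqrt_pos.2 ha).ne', mul_assoc,
    Real.mul_self_sqrt ha.le]

lemma term2_le (A n c p p' : ℝ) (hA : 0 ≤ A) (hc : 0 < c) (hn : 1 ≤ n)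
    (hp : 1/2 ≤ p) (hpp' : p < p') (hp' : p' < 1) :
    A * (n*p*(1-p)+1)*(p^2+(1-p)^2)/(n^2*p^2*(1-p)^2*c)
      ≤ A * (n*p'*(1-p')+1)*(p'^2+(1-p')^2)/(n^2*p'^2*(1-p')^2*c) := by
  have hp0 : 0 < p := lt_of_lt_of_le (by norm_num) hp
  have hp1 : p < 1 := hpp'.trans hp'
  have hp'0 : 0 < p' := hp0.trans hpp'
  have h1p : 0 < 1 - p := by linarith
  have h1p' : 0 < 1 - p' := by linarith
  have hn0 : 0 < n := by linarith
  have ht : 0 < p*(1-p) := mul_pos hp0 h1p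
  have ht' : 0 < p'*(1-p') := mul_pos hp'0 h1p'
  have htt' : p'*(1-p') < p*(1-p) := by nlinarith
  have ht4 : p*(1-p) ≤ 1/4 := by nlinarith [sq_nonneg (p-1/2)]
  have e2 : ∀ r : ℝ, 0 < r → r < 1 →
      A * (n*r*(1-r)+1)*(r^2+(1-r)^2)/(n^2*r^2*(1-r)^2*c)
        = (A/(n^2*c)) * ((n*(r*(1-r))+1)*(1-2*(r*(1-r)))/(r*(1-r))^2) := by
    intro r hr0 hr1
    have hr1' : (0:ℝ) < 1 - r := by linarith
    field_simp
    ring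
  rw [e2 p hp0 hp1, e2 p' hp'0 hp']
  exact mul_le_mul_of_nonneg_left (core2 n _ _ hn ht' htt' ht4) (by positivity)

lemma S1_mono (n p p' : ℝ) (hn : 1 ≤ n)
    (hp : 1/2 ≤ p) (hpp' : p < p') (hp' : p' < 1) :
    S1 n p ≤ S1 n p' := by
  have hp0 : 0 < p := lt_of_lt_of_le (by norm_num) hp
  have hp1 : p < 1 := hpp'.trans hp'
  have hp'0 : 0 < p' := hp0.trans hpp'
  have h1p : 0 < 1 - p := by linarith
  have h1p' : 0 < 1 - p' := by linarith
  have hn0 : 0 < n := by linarith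
  have ht : 0 < p*(1-p) := mul_pos hp0 h1p
  have ht' : 0 < p'*(1-p') := mul_pos hp'0 h1p'
  have htt' : p'*(1-p') < p*(1-p) := by nlinarith
  have ht4 : p*(1-p) ≤ 1/4 := by nlinarith [sq_nonneg (p-1/2)]
  have e3 : ∀ r : ℝ, 0 < r → r < 1 →
      S1 n r = (1/(n*(n+1)*(n+2))) *
        ((1-3*(r*(1-r)))*((3*n+2)*(r*(1-r))+2)/(r*(1-r))^3) := by
    intro r hr0 hr1
    have hr1' : (0:ℝ) < 1 - r := by linarith
    rw [S1]
    field_simp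
    ring
  rw [e3 p hp0 hp1, e3 p' hp'0 hp']
  exact mul_le_mul_of_nonneg_left (core3 (3*n+2) _ _ (by linarith) ht' htt' ht4) (by positivity)

lemma term4_le (α L2 L3 Q n p p' : ℝ) (hα : 0 ≤ α) (hL2 : 0 ≤ L2) (hL3 : 0 ≤ L3)
    (hQ : 0 ≤ Q) (hn : 1 ≤ n) (hp : 1/2 ≤ p) (hpp' : p < p') (hp' : p' < 1) :
    2/3 * α * (Real.sqrt (2*n*p*(1-p)*L3) + 1 + 2/3 * max p (1-p) * L3)^2
        * (p^2+(1-p)^2) * L2 * Q / (n^2*p^2*(1-p)^2)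
      ≤ 2/3 * α * (Real.sqrt (2*n*p'*(1-p')*L3) + 1 + 2/3 * max p' (1-p') * L3)^2
        * (p'^2+(1-p')^2) * L2 * Q / (n^2*p'^2*(1-p')^2) := by
  have hp0 : 0 < p := lt_of_lt_of_le (by norm_num) hp
  have hp1 : p < 1 := hpp'.trans hp'
  have hp'0 : 0 < p' := hp0.trans hpp'
  have h1p : 0 < 1 - p := by linarith
  have h1p' : 0 < 1 - p' := by linarith
  have hn0 : 0 < n := by linarith
  have ht : 0 < p*(1-p) := mul_pos hp0 h1p
  have ht' : 0 < p'*(1-p') := mul_pos hp'0 h1p'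
  have htt' : p'*(1-p') < p*(1-p) := by nlinarith
  have ht4 : p*(1-p) ≤ 1/4 := by nlinarith [sq_nonneg (p-1/2)]
  have hc : (0:ℝ) ≤ 2*n*L3 := by positivity
  have emax : max p (1-p) = p := max_eq_left (by linarith)
  have emax' : max p' (1-p') = p' := max_eq_left (by linarith)
  have earg : ∀ r : ℝ, 2*n*r*(1-r)*L3 = (2*n*L3)*(r*(1-r)) := fun r => by ring
  rw [emax, emax', earg p, earg p']
  have h1 : Real.sqrt ((2*n*L3)*(p*(1-p)))/(p*(1-p)) ≤
      Real.sqrt ((2*n*L3)*(p'*(1-p')))/(p'*(1-p')) := by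
    rw [sqrt_mul_div _ _ hc ht, sqrt_mul_div _ _ hc ht']
    gcongr
  have h2 : (1 + 2/3*p*L3)/(p*(1-p)) ≤ (1 + 2/3*p'*L3)/(p'*(1-p')) := by
    refine div_le_div₀ ?_ ?_ ht' htt'.le
    · positivity
    · nlinarith
  have hB : (Real.sqrt ((2*n*L3)*(p*(1-p))) + (1 + 2/3*p*L3))/(p*(1-p)) ≤
      (Real.sqrt ((2*n*L3)*(p'*(1-p'))) + (1 + 2/3*p'*L3))/(p'*(1-p')) := by
    calc (Real.sqrt ((2*n*L3)*(p*(1-p))) + (1 + 2/3*p*L3))/(p*(1-p))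
        = Real.sqrt ((2*n*L3)*(p*(1-p)))/(p*(1-p)) + (1 + 2/3*p*L3)/(p*(1-p)) :=
          add_div _ _ _
      _ ≤ Real.sqrt ((2*n*L3)*(p'*(1-p')))/(p'*(1-p')) + (1 + 2/3*p'*L3)/(p'*(1-p')) :=
          add_le_add h1 h2
      _ = (Real.sqrt ((2*n*L3)*(p'*(1-p'))) + (1 + 2/3*p'*L3))/(p'*(1-p')) :=
          (add_div _ _ _).symm
  have hB0 : 0 ≤ (Real.sqrt ((2*n*L3)*(p*(1-p))) + (1 + 2/3*p*L3))/(p*(1-p)) := by positivity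
  have hsq := pow_le_pow_left₀ hB0 hB 2
  have key : (Real.sqrt ((2*n*L3)*(p*(1-p))) + 1 + 2/3*p*L3)^2 * (1-2*(p*(1-p)))/(p*(1-p))^2
      ≤ (Real.sqrt ((2*n*L3)*(p'*(1-p'))) + 1 + 2/3*p'*L3)^2 * (1-2*(p'*(1-p')))/(p'*(1-p'))^2 := by
    have e : ∀ X t : ℝ, (X^2) * (1-2*t)/t^2 = (X/t)^2 * (1-2*t) := fun X t => by
      rw [div_pow]; ring
    calc (Real.sqrt ((2*n*L3)*(p*(1-p))) + 1 + 2/3*p*L3)^2 * (1-2*(p*(1-p)))/(p*(1-p))^2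
        = ((Real.sqrt ((2*n*L3)*(p*(1-p))) + (1 + 2/3*p*L3))/(p*(1-p)))^2 * (1-2*(p*(1-p))) := by
          rw [← e]; ring_nf
      _ ≤ ((Real.sqrt ((2*n*L3)*(p'*(1-p'))) + (1 + 2/3*p'*L3))/(p'*(1-p')))^2 * (1-2*(p'*(1-p'))) := by
          apply mul_le_mul hsq (by linarith) (by nlinarith) (by positivity)
      _ = (Real.sqrt ((2*n*L3)*(p'*(1-p'))) + 1 + 2/3*p'*L3)^2 * (1-2*(p'*(1-p')))/(p'*(1-p'))^2 := by
          rw [← e]; ring_nf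
  have e4 : ∀ r X : ℝ, 0 < r → r < 1 →
      2/3 * α * X^2 * (r^2+(1-r)^2) * L2 * Q / (n^2*r^2*(1-r)^2)
        = (2/3 * α * L2 * Q / n^2) * (X^2 * (1-2*(r*(1-r)))/(r*(1-r))^2) := by
    intro r X hr0 hr1
    have hr1' : (0:ℝ) < 1 - r := by linarith
    field_simp
    ring
  rw [e4 p _ hp0 hp1, e4 p' _ hp'0 hp']
  exact mul_le_mul_of_nonneg_left key (by positivity)

/-- the privacy budget estimate is strictly increasing in p on [1/2, 1). -/
theorem eps_strictMono_in_p (d : ℕ) (hd : 1 ≤ d) (δ : ℝ) (hδ : δ ∈ Set.Ioo (0 : ℝ) 1)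
    (q n : ℤ) (hq : 2 ≤ q) (hn : 1 ≤ n)
    (p p' : ℝ) (hp : 1 / 2 ≤ p) (hpp' : p < p') (hp' : p' < 1) :
    eps d δ (q : ℝ) (n : ℝ) p < eps d δ (q : ℝ) (n : ℝ) p' := by
  obtain ⟨hδ0, hδ1⟩ := hδ
  have hp0 : 0 < p := lt_of_lt_of_le (by norm_num) hp
  have hp1 : p < 1 := hpp'.trans hp'
  have hp'0 : 0 < p' := hp0.trans hpp'
  have h1p : 0 < 1 - p := by linarith
  have h1p' : 0 < 1 - p' := by linarith
  have hn1 : (1:ℝ) ≤ (n:ℝ) := by exact_mod_cast hn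
  have hn0 : (0:ℝ) < (n:ℝ) := by linarith
  have hq2 : (2:ℝ) ≤ (q:ℝ) := by exact_mod_cast hq
  have hd1 : (1:ℝ) ≤ (d:ℝ) := by exact_mod_cast hd
  have htt' : p'*(1-p') < p*(1-p) := by nlinarith
  have hL1 : 0 < Real.log (1.25/δ) := Real.log_pos (by rw [lt_div_iff₀ hδ0]; linarith)
  have hL2 : 0 < Real.log (10/δ) := Real.log_pos (by rw [lt_div_iff₀ hδ0]; linarith)
  have hL3 : 0 < Real.log (20*(d:ℝ)/δ) := Real.log_pos (by rw [lt_div_iff₀ hδ0]; nlinarith)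
  have hL4 : 0 < Real.log (2/δ) := Real.log_pos (by rw [lt_div_iff₀ hδ0]; linarith)
  have hα : 0 < alphaC := alphaC_pos
  have hδ10 : 0 < 1 - δ/10 := by linarith
  have hsd : (1:ℝ) ≤ Real.sqrt d := by
    rw [show (1:ℝ) = Real.sqrt 1 from (Real.sqrt_one).symm]
    exact Real.sqrt_le_sqrt hd1
  have hD1 : 0 < Delta1 d δ (q:ℝ) := by
    unfold Delta1
    have h1 : (1:ℝ) ≤ Real.sqrt d * ((q:ℝ) - 1) := by nlinarith
    have h2 : 0 ≤ Real.sqrt (2 * Real.sqrt d * ((q:ℝ) - 1) * Real.log (2 / δ)) :=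
      Real.sqrt_nonneg _
    linarith
  have hD2 : 0 < Delta2 d δ (q:ℝ) := by
    unfold Delta2
    have h2 : 0 ≤ Real.sqrt (Delta1 d δ (q:ℝ) +
        Real.sqrt (2 * Real.sqrt d * ((q:ℝ) - 1) * Real.log (2 / δ))) := Real.sqrt_nonneg _
    linarith
  have hQ : 0 < DeltaInf (q:ℝ) := by unfold DeltaInf; linarith
  have hnt' : 0 < (n:ℝ) * p' * (1-p') := by positivity
  have hntlt : (n:ℝ) * p' * (1-p') < (n:ℝ) * p * (1-p) := by
    have := mul_lt_mul_of_pos_left htt' hn0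
    nlinarith
  rw [eps, eps]
  refine add_lt_add_of_le_of_lt (add_le_add (add_le_add (add_le_add ?h1 ?h2) ?h3) ?h4) ?h5
  case h1 => gcongr
  case h2 =>
    exact term2_le (alphaC * Delta1 d δ (q:ℝ)) (n:ℝ) (1 - δ/10) p p'
      (mul_nonneg hα.le hD1.le) hδ10 hn1 hp hpp' hp'
  case h3 =>
    have hS1 : S1 (n:ℝ) p ≤ S1 (n:ℝ) p' := S1_mono (n:ℝ) p p' hn1 hp hpp' hp'
    gcongr
  case h4 =>
    simp only [S2, DeltaInf]
    exact term4_le alphaC (Real.log (10/δ)) (Real.log (20*(d:ℝ)/δ)) ((q:ℝ)+1) (n:ℝ) p p'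
      hα.le hL2.le hL3.le (by linarith) hn1 hp hpp' hp'
  case h5 => gcongr
end

section
/- For every integer q ≥ 2, every real p ∈ (0,1), and every real ε̄ > 0, there exists a positive integer n₁ such that for every positive integer n, ε(q,n,p) ≤ ε̄ if and only if n ≥ n₁. -/
/-!
Viewed as a function of a real `n > 0`, `ε(q, n, p)` is antitone and tends to `0`: each of its
five summands is a nonnegative constant times a function built by sums, square roots and squares
from terms `1 / g n` with `g > 0` increasing to `∞`. The constants are nonnegative (`α ≥ 0`
because `log (2/3) ≤ -1/3`), `S₁(n, p)` is a nonnegative combination of `1/((n+1)(n+2))` and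
`1/(n(n+1)(n+2))`, and `S₂(n, p)/n² = (a/√n + b/n)²` with `a, b ≥ 0`. Since `ε̄ > 0`, the
positive integers `n` with `ε ≤ ε̄` therefore form a nonempty up-set, and `n₁` is its least
element.
-/

open Filter Topology Set

def DecreasesToZero (f : ℝ → ℝ) : Prop :=
  AntitoneOn f (Ioi 0) ∧ Tendsto f atTop (𝓝 0)

namespace DecreasesToZero

variable {f g : ℝ → ℝ}

theorem nonneg (hf : DecreasesToZero f) {x : ℝ} (hx : 0 < x) : 0 ≤ f x :=
  le_of_tendsto hf.2 <| (eventually_ge_atTop x).mono fun _ hy => hf.1 hx (hx.trans_le hy) hy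

theorem congr (hf : DecreasesToZero f) (h : EqOn f g (Ioi 0)) : DecreasesToZero g :=
  ⟨hf.1.congr h, hf.2.congr' (eventually_of_mem (Ioi_mem_atTop 0) h)⟩

theorem add (hf : DecreasesToZero f) (hg : DecreasesToZero g) :
    DecreasesToZero fun x => f x + g x :=
  ⟨fun _ hx _ hy hxy => add_le_add (hf.1 hx hy hxy) (hg.1 hx hy hxy), by
    simpa using hf.2.add hg.2⟩

theorem const_mul (hf : DecreasesToZero f) {c : ℝ} (hc : 0 ≤ c) :
    DecreasesToZero fun x => c * f x :=
  ⟨fun _ hx _ hy hxy => mul_le_mul_of_nonneg_left (hf.1 hx hy hxy) hc, by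
    simpa using hf.2.const_mul c⟩

theorem mul_const (hf : DecreasesToZero f) {c : ℝ} (hc : 0 ≤ c) :
    DecreasesToZero fun x => f x * c := by
  simpa only [mul_comm _ c] using hf.const_mul hc

theorem sqrt (hf : DecreasesToZero f) : DecreasesToZero fun x => √(f x) :=
  ⟨fun _ hx _ hy hxy => Real.sqrt_le_sqrt (hf.1 hx hy hxy), by
    simpa using hf.2.sqrt⟩

theorem pow (hf : DecreasesToZero f) {n : ℕ} (hn : n ≠ 0) : DecreasesToZero fun x => f x ^ n :=
  ⟨fun _ hx _ hy hxy => pow_le_pow_left₀ (hf.nonneg hy) (hf.1 hx hy hxy) n, by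
    simpa [zero_pow hn] using hf.2.pow n⟩

theorem exists_nat_threshold (hf : DecreasesToZero f) {ε : ℝ} (hε : 0 < ε) :
    ∃ n₁ : ℕ, 0 < n₁ ∧ ∀ n : ℕ, 0 < n → (f n ≤ ε ↔ n₁ ≤ n) := by
  classical
  have hsmall : ∃ n : ℕ, 0 < n ∧ f n ≤ ε := by
    obtain ⟨N, hN⟩ := ((hf.2.comp tendsto_natCast_atTop_atTop).eventually
      (eventually_le_nhds hε)).exists_forall_of_atTop
    exact ⟨N + 1, N.succ_pos, hN _ N.le_succ⟩
  obtain ⟨hpos, hle⟩ := Nat.find_spec hsmall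
  refine ⟨Nat.find hsmall, hpos, fun n hn => ⟨fun h => Nat.find_min' hsmall ⟨hn, h⟩, fun h => ?_⟩⟩
  exact (hf.1 (mem_Ioi.2 (Nat.cast_pos.2 hpos)) (mem_Ioi.2 (Nat.cast_pos.2 hn))
    (Nat.cast_le.2 h)).trans hle

end DecreasesToZero

theorem decreasesToZero_const_div {g : ℝ → ℝ} {c : ℝ} (hc : 0 ≤ c)
    (hg : MonotoneOn g (Ioi 0)) (hg₀ : ∀ x ∈ Ioi 0, 0 < g x) (hg_top : Tendsto g atTop atTop) :
    DecreasesToZero fun x => c / g x :=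
  ⟨fun _ hx _ hy hxy => div_le_div_of_nonneg_left hc (hg₀ _ hx) (hg hx hy hxy),
    tendsto_const_nhds.div_atTop hg_top⟩

theorem decreasesToZero_const_div_comp_mul_mul {g : ℝ → ℝ} {a b c : ℝ} (ha : 0 ≤ a)
    (hbc : 0 < b * c) (hg : MonotoneOn g (Ioi 0)) (hg₀ : ∀ y ∈ Ioi 0, 0 < g y)
    (hg_top : Tendsto g atTop atTop) : DecreasesToZero fun x => a / g (x * b * c) := by
  have hpos : ∀ x ∈ Ioi (0 : ℝ), x * b * c ∈ Ioi 0 := fun x (hx : 0 < x) => by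
    rw [mem_Ioi, mul_assoc]; exact mul_pos hx hbc
  refine decreasesToZero_const_div ha (fun x hx y hy hxy => hg (hpos x hx) (hpos y hy) ?_)
    (fun x hx => hg₀ _ (hpos x hx)) (hg_top.comp ?_)
  · simp only [mul_assoc]
    exact mul_le_mul_of_nonneg_right hxy hbc.le
  · simpa only [mul_assoc, id] using tendsto_id.atTop_mul_const hbc

theorem alphaC_nonneg : 0 ≤ alphaC := by
  have h := Real.log_le_sub_one_of_pos (by norm_num : (0 : ℝ) < 2 / 3)
  unfold alphaC
  linarith

theorem Delta1_nonneg (d : ℕ) {δ q : ℝ} (hδ₀ : 0 < δ) (hδ₂ : δ ≤ 2) (hq : 1 ≤ q) :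
    0 ≤ Delta1 d δ q := by
  have hL : 0 ≤ Real.log (2 / δ) := Real.log_nonneg (by rw [le_div_iff₀ hδ₀]; linarith)
  have := sub_nonneg.2 hq
  unfold Delta1
  positivity

theorem Delta2_nonneg (d : ℕ) {δ q : ℝ} (hq : 1 ≤ q) : 0 ≤ Delta2 d δ q := by
  have := sub_nonneg.2 hq
  unfold Delta2
  positivity

theorem S1_decreasesToZero {p : ℝ} (hp : p ∈ Ioo 0 1) : DecreasesToZero fun n => S1 n p := by
  obtain ⟨hp₀, hp₁⟩ := hp
  have hc : 0 < p * (1 - p) := mul_pos hp₀ (sub_pos.2 hp₁)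
  have hk : 0 ≤ 3 * p ^ 2 - 3 * p + 1 := by nlinarith [sq_nonneg (2 * p - 1)]
  have hx1 : Tendsto (fun x : ℝ => x + 1) atTop atTop :=
    tendsto_atTop_add_const_right _ 1 tendsto_id
  have hx2 : Tendsto (fun x : ℝ => x + 2) atTop atTop :=
    tendsto_atTop_add_const_right _ 2 tendsto_id
  have h₁ : DecreasesToZero fun x => 3 / ((x + 1) * (x + 2)) :=
    decreasesToZero_const_div (by norm_num)
      (fun x hx y hy hxy => by simp only [mem_Ioi] at hx hy; gcongr)
      (fun x hx => by simp only [mem_Ioi] at hx; positivity) (hx1.atTop_mul_atTop₀ hx2)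
  have h₂ : DecreasesToZero fun x => (2 + 2 / (p * (1 - p))) / (x * (x + 1) * (x + 2)) :=
    decreasesToZero_const_div (by positivity)
      (fun x hx y hy hxy => by simp only [mem_Ioi] at hx hy; gcongr)
      (fun x hx => by simp only [mem_Ioi] at hx; positivity)
      ((tendsto_id.atTop_mul_atTop₀ hx1).atTop_mul_atTop₀ hx2)
  refine ((h₁.add h₂).const_mul
    (by positivity : 0 ≤ (3 * p ^ 2 - 3 * p + 1) / (p * (1 - p)) ^ 2)).congr
    fun x (hx : 0 < x) => ?_
  simp only [S1]
  field_simp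
  ring

theorem S2_div_sq_decreasesToZero {d : ℕ} {δ : ℝ} (p : ℝ) (hL : 0 ≤ Real.log (20 * d / δ)) :
    DecreasesToZero fun n => S2 d δ n p / n ^ 2 := by
  have hm : 0 ≤ max p (1 - p) := by
    linarith [le_max_left p (1 - p), le_max_right p (1 - p)]
  have h : DecreasesToZero fun x =>
      (√(2 * p * (1 - p) * Real.log (20 * d / δ)) / √x +
        (1 + 2 / 3 * max p (1 - p) * Real.log (20 * d / δ)) / x) ^ 2 :=
    (DecreasesToZero.add
      (decreasesToZero_const_div (Real.sqrt_nonneg _) (fun _ _ _ _ h => Real.sqrt_le_sqrt h)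
        (fun _ hx => Real.sqrt_pos.2 hx) Real.tendsto_sqrt_atTop)
      (decreasesToZero_const_div (by positivity) (fun _ _ _ _ h => h) (fun _ hx => hx)
        tendsto_id)).pow two_ne_zero
  refine h.congr fun x (hx : 0 < x) => ?_
  obtain ⟨s, hs, rfl⟩ : ∃ s, 0 < s ∧ s ^ 2 = x := ⟨√x, Real.sqrt_pos.2 hx, Real.sq_sqrt hx.le⟩
  have hsplit : 2 * s ^ 2 * p * (1 - p) * Real.log (20 * d / δ) =
      (2 * p * (1 - p) * Real.log (20 * d / δ)) * s ^ 2 := by ring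
  simp only [S2, hsplit, Real.sqrt_mul' _ (sq_nonneg s), Real.sqrt_sq hs.le]
  field_simp
  ring

theorem eps_decreasesToZero {d : ℕ} (hd : 1 ≤ d) {δ q p : ℝ} (hδ : δ ∈ Ioo 0 1) (hq : 1 ≤ q)
    (hp : p ∈ Ioo 0 1) : DecreasesToZero fun n => eps d δ q n p := by
  obtain ⟨hδ₀, hδ₁⟩ := hδ
  have hc : 0 < p * (1 - p) := mul_pos hp.1 (sub_pos.2 hp.2)
  have hlog {a : ℝ} (ha : δ ≤ a) : 0 ≤ Real.log (a / δ) :=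
    Real.log_nonneg ((one_le_div hδ₀).2 ha)
  have hL₁ := hlog (a := 1.25) (by linarith)
  have hL₂ := hlog (a := 10) (by linarith)
  have hL₃ := hlog (a := 20 * d) (by
    have : (1 : ℝ) ≤ d := by exact_mod_cast hd
    linarith)
  have hs : 0 < 1 - δ / 10 := by linarith
  have hα := alphaC_nonneg
  have hΔ₁ := Delta1_nonneg d hδ₀ (by linarith) hq
  have hΔ₂ := Delta2_nonneg d (δ := δ) hq
  have hΔ : 0 ≤ DeltaInf q := by unfold DeltaInf; linarith
  have hinv {a : ℝ} (ha : 0 ≤ a) : DecreasesToZero fun x => a / (x * p * (1 - p)) :=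
    decreasesToZero_const_div_comp_mul_mul (g := id) ha hc (fun _ _ _ _ h => h) (fun _ hy => hy)
      tendsto_id
  unfold eps
  refine ((((?_ : DecreasesToZero _).add ?_).add ?_).add ?_).add (hinv (by positivity))
  · exact decreasesToZero_const_div_comp_mul_mul (g := Real.sqrt) (by positivity) hc
      (fun _ _ _ _ h => Real.sqrt_le_sqrt h) (fun _ hy => Real.sqrt_pos.2 hy)
      Real.tendsto_sqrt_atTop
  · have hA : 0 ≤ alphaC * Delta1 d δ q * (p ^ 2 + (1 - p) ^ 2) / (1 - δ / 10) := by positivity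
    refine ((hinv hA).add (decreasesToZero_const_div_comp_mul_mul (g := (· ^ 2)) hA hc
      (fun _ hx _ _ h => pow_le_pow_left₀ (le_of_lt hx) h 2) (fun _ hy => pow_pos hy 2)
      (tendsto_pow_atTop two_ne_zero))).congr fun x (hx : 0 < x) => ?_
    field_simp
  · exact (((S1_decreasesToZero hp).const_mul zero_le_two).mul_const hL₂).sqrt.const_mul
      (by positivity)
  · refine ((S2_div_sq_decreasesToZero p hL₃).const_mul (by positivity :
      0 ≤ 2 / 3 * alphaC * (p ^ 2 + (1 - p) ^ 2) * Real.log (10 / δ) * DeltaInf q /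
        (p * (1 - p)) ^ 2)).congr fun x (hx : 0 < x) => ?_
    field_simp

/-- for any budget upper bound there is a threshold trial number n₁ such that
the privacy budget estimate is at most the bound iff n ≥ n₁. -/
theorem eps_threshold (d : ℕ) (hd : 1 ≤ d) (δ : ℝ) (hδ : δ ∈ Set.Ioo (0 : ℝ) 1)
    (q : ℤ) (hq : 2 ≤ q) (p : ℝ) (hp : p ∈ Set.Ioo (0 : ℝ) 1)
    (ebar : ℝ) (hebar : 0 < ebar) :
    ∃ n₁ : ℕ, 0 < n₁ ∧ ∀ n : ℕ, 0 < n → (eps d δ (q : ℝ) (n : ℝ) p ≤ ebar ↔ n₁ ≤ n) := by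
  have hq₁ : (1 : ℝ) ≤ q := by exact_mod_cast (show (1 : ℤ) ≤ q by omega)
  exact (eps_decreasesToZero hd hδ hq₁ hp).exists_nat_threshold hebar
end

section
/- For all integers m ≥ 0 and i ≥ 1 and for every real p ∈ (0,1], the expectation of the reciprocal rising factorial of a Binomial(m,p) random variable satisfies Σ_{k=0}^{m} (m choose k)·p^k·(1−p)^{m−k}·(k!)/((k+i)!) ≤ 1/(p^i·(m+1)(m+2)⋯(m+i)). -/
open Finset Nat

/-
Since `C(m,k) k!/(k+i)! = C(m+i,k+i) m!/(m+i)!`, the expectation equals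
`m!/((m+i)! pⁱ)` times `P(Y ≥ i)` for `Y ~ Binomial(m+i, p)`, and that probability is at most 1.
-/

theorem prod_range_cast_add_add_one (m i : ℕ) :
    ∏ j ∈ range i, ((m : ℝ) + j + 1) = ((m + i)! : ℝ) / m ! := by
  rw [eq_div_iff (by positivity), ← Nat.factorial_mul_ascFactorial, Nat.ascFactorial_eq_prod_range]
  push_cast
  rw [mul_comm]
  simp only [add_right_comm]

theorem choose_mul_factorial_div_factorial_add {m k : ℕ} (hk : k ≤ m) (i : ℕ) :
    (m.choose k : ℝ) * k ! / (k + i)! = (m ! / (m + i)!) * ((m + i).choose (i + k) : ℝ) := by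
  rw [Nat.cast_choose ℝ hk, Nat.cast_choose ℝ (by omega : i + k ≤ m + i),
    show m + i - (i + k) = m - k by omega, add_comm i k]
  field_simp

theorem sum_binomial_tail_le_one {p : ℝ} (hp0 : 0 ≤ p) (hp1 : p ≤ 1) (m i : ℕ) :
    ∑ k ∈ range (m + 1), ((m + i).choose (i + k) : ℝ) * p ^ (i + k) * (1 - p) ^ (m - k) ≤ 1 := by
  have hq : 0 ≤ 1 - p := by linarith
  have htotal : ∑ j ∈ range (i + (m + 1)),
      ((m + i).choose j : ℝ) * p ^ j * (1 - p) ^ (m + i - j) = 1 := by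
    rw [show i + (m + 1) = m + i + 1 by omega]
    have h := (add_pow p (1 - p) (m + i)).symm
    rw [add_sub_cancel, one_pow] at h
    exact (sum_congr rfl fun j _ => by ring).trans h
  rw [sum_range_add] at htotal
  have hhead : 0 ≤ ∑ j ∈ range i, ((m + i).choose j : ℝ) * p ^ j * (1 - p) ^ (m + i - j) :=
    sum_nonneg fun j _ => by positivity
  simp only [show ∀ k, m + i - (i + k) = m - k by omega] at htotal
  linarith

theorem binomial_reciprocal_rising_factorial_expectation_general (m i : ℕ)
    (p : ℝ) (hp : p ∈ Set.Ioc (0 : ℝ) 1) :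
    ∑ k ∈ Finset.range (m + 1),
        (m.choose k : ℝ) * p ^ k * (1 - p) ^ (m - k) * (k.factorial : ℝ) /
          ((k + i).factorial : ℝ)
      ≤ 1 / (p ^ i * ∏ j ∈ Finset.range i, ((m : ℝ) + (j : ℝ) + 1)) := by
  obtain ⟨hp0, hp1⟩ := hp
  set c : ℝ := m ! / (m + i)! / p ^ i with hc
  have hterm : ∀ k ∈ range (m + 1),
      (m.choose k : ℝ) * p ^ k * (1 - p) ^ (m - k) * k ! / (k + i)!
        = c * (((m + i).choose (i + k) : ℝ) * p ^ (i + k) * (1 - p) ^ (m - k)) := by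
    intro k hk
    have h := choose_mul_factorial_div_factorial_add (mem_range_succ_iff.mp hk) i
    rw [show (m.choose k : ℝ) * p ^ k * (1 - p) ^ (m - k) * k ! / (k + i)!
        = (m.choose k : ℝ) * k ! / (k + i)! * (p ^ k * (1 - p) ^ (m - k)) by ring, h, pow_add, hc]
    field_simp
  calc _ = c * ∑ k ∈ range (m + 1),
          ((m + i).choose (i + k) : ℝ) * p ^ (i + k) * (1 - p) ^ (m - k) := by
        rw [mul_sum]; exact sum_congr rfl hterm
    _ ≤ c * 1 := by gcongr; exact sum_binomial_tail_le_one hp0.le hp1 m i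
    _ = _ := by rw [mul_one, prod_range_cast_add_add_one, hc]; field_simp

/-- expectation of the reciprocal rising factorial of a Binomial(m, p)
random variable is at most 1 / (pⁱ (m+1)(m+2)⋯(m+i)). -/
theorem binomial_reciprocal_rising_factorial_expectation (m i : ℕ) (hi : 1 ≤ i)
    (p : ℝ) (hp : p ∈ Set.Ioc (0 : ℝ) 1) :
    ∑ k ∈ Finset.range (m + 1),
        (m.choose k : ℝ) * p ^ k * (1 - p) ^ (m - k) * (k.factorial : ℝ) /
          ((k + i).factorial : ℝ)
      ≤ 1 / (p ^ i * ∏ j ∈ Finset.range i, ((m : ℝ) + (j : ℝ) + 1)) :=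
  binomial_reciprocal_rising_factorial_expectation_general m i p hp
end

section
/- For every positive integer m, the series identity Σ_{j=2}^{∞} (j−2)!·(m−1)!/((m+j−1)!) = 1/m² holds; equivalently, 1/m² = Σ_{j=2}^{∞} (j−2)!/(m·(m+1)⋯(m+j−1)). -/
open Filter Topology Nat

/- Since `m · i!/(m+i+1)! = i!/(m+i)! - (i+1)!/(m+i+1)!`, the series telescopes; its partial sums
tend to `0!/m! = 1/m!` because `i!/(m+i)! ≤ 1/(i+1) → 0`. Multiplying by `(m-1)!/m` gives `1/m²`. -/

theorem hasSum_sub_succ_of_tendsto {f : ℕ → ℝ} {l : ℝ} (hf : ∀ i, f (i + 1) ≤ f i)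
    (hl : Tendsto f atTop (𝓝 l)) : HasSum (fun i => f i - f (i + 1)) (f 0 - l) := by
  rw [hasSum_iff_tendsto_nat_of_nonneg (fun i => sub_nonneg.mpr (hf i))]
  simp only [Finset.sum_range_sub']
  exact tendsto_const_nhds.sub hl

theorem mul_factorial_div_factorial_add_succ (m i : ℕ) :
    (m : ℝ) * (i ! / (m + i + 1)!) = i ! / (m + i)! - (i + 1)! / (m + (i + 1))! := by
  rw [← add_assoc, factorial_succ (m + i), factorial_succ i]
  push_cast
  field_simp
  ring

theorem factorial_div_factorial_add_le {m : ℕ} (hm : 1 ≤ m) (i : ℕ) :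
    (i ! : ℝ) / (m + i)! ≤ 1 / (i + 1) := by
  have hle : (i + 1) * i ! ≤ (m + i)! := by
    rw [← factorial_succ]
    exact factorial_le (by omega)
  rw [div_le_div_iff₀ (by positivity) (by positivity), one_mul]
  exact_mod_cast (mul_comm _ _).trans_le hle

theorem tendsto_factorial_div_factorial_add {m : ℕ} (hm : 1 ≤ m) :
    Tendsto (fun i => (i ! : ℝ) / (m + i)!) atTop (𝓝 0) :=
  squeeze_zero (fun _ => by positivity) (factorial_div_factorial_add_le hm)
    tendsto_one_div_add_atTop_nhds_zero_nat

theorem hasSum_factorial_div_factorial_add_succ {m : ℕ} (hm : 1 ≤ m) :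
    HasSum (fun i => (i ! : ℝ) / (m + i + 1)!) (1 / (m * m !)) := by
  have hm0 : (m : ℝ) ≠ 0 := by positivity
  have hanti (i : ℕ) : ((i + 1)! : ℝ) / (m + (i + 1))! ≤ i ! / (m + i)! := by
    rw [← sub_nonneg, ← mul_factorial_div_factorial_add_succ]
    positivity
  have htel := hasSum_sub_succ_of_tendsto hanti (tendsto_factorial_div_factorial_add hm)
  simp only [← mul_factorial_div_factorial_add_succ, factorial_zero, cast_one, add_zero,
    sub_zero] at htel
  rw [mul_comm, ← div_div]
  simpa only [mul_div_cancel_left₀ _ hm0] using htel.div_const (m : ℝ)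

/-- for every positive integer m,
Σ_{j=2}^∞ (j-2)!·(m-1)!/((m+j-1)!) = 1/m² (reindexed by j = i + 2). -/
theorem series_inv_sq (m : ℕ) (hm : 1 ≤ m) :
    ∑' i : ℕ, ((i.factorial : ℝ) * ((m - 1).factorial : ℝ)) / ((m + i + 1).factorial : ℝ)
      = 1 / (m : ℝ) ^ 2 := by
  have hfac : (m ! : ℝ) = m * (m - 1)! := by
    exact_mod_cast (mul_factorial_pred (by omega)).symm
  simp only [mul_div_right_comm _ ((m - 1)! : ℝ)]
  rw [((hasSum_factorial_div_factorial_add_succ hm).mul_right _).tsum_eq, hfac]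
  have : ((m - 1)! : ℝ) ≠ 0 := by positivity
  field_simp
end

section
/- Let η ∈ (0, 1/4) and set μ = 2/(1 − √(1 − 4η)). Let p*, p ∈ (0,1) with p*(1−p*) ≥ η, let λ > 0 with |p − p*| < λ, and let n ≥ 0 be a real number. Then 1 + n·p(1−p) < (1 + μλ)·(1 + n·p*(1−p*)). -/
/-- relative stability of 1 + n p (1-p) under a perturbation of p of size
less than λ around a point p* with p*(1-p*) ≥ η, where μ = 2/(1 - √(1-4η)). -/
theorem objective_relative_error (η : ℝ) (hη : η ∈ Set.Ioo (0 : ℝ) (1 / 4))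
    (pstar p : ℝ) (hps : pstar ∈ Set.Ioo (0 : ℝ) 1) (hp : p ∈ Set.Ioo (0 : ℝ) 1)
    (hvar : η ≤ pstar * (1 - pstar)) (lam : ℝ) (hlam : 0 < lam)
    (hclose : |p - pstar| < lam) (n : ℝ) (hn : 0 ≤ n) :
    1 + n * p * (1 - p) <
      (1 + 2 / (1 - Real.sqrt (1 - 4 * η)) * lam) * (1 + n * pstar * (1 - pstar)) := by
  obtain ⟨hη0, hη4⟩ := hη
  obtain ⟨ha0, ha1⟩ := hps
  obtain ⟨hp0, hp1⟩ := hp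
  set s := Real.sqrt (1 - 4 * η) with hs
  have hs0 : 0 ≤ s := Real.sqrt_nonneg _
  have hs2 : s ^ 2 = 1 - 4 * η := Real.sq_sqrt (by linarith)
  have hs1 : s < 1 := by nlinarith
  have hden : 0 < 1 - s := by linarith
  have hμ : 0 < 2 / (1 - s) := by positivity
  have h1 : 1 - s ≤ 2 * pstar := by nlinarith [sq_nonneg (s - (1 - 2 * pstar))]
  have h2 : 1 - s ≤ 2 * (1 - pstar) := by nlinarith [sq_nonneg (s - (2 * pstar - 1))]
  have key : |1 - p - pstar| ≤ 2 / (1 - s) * (pstar * (1 - pstar)) := by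
    rw [div_mul_eq_mul_div, le_div_iff₀ hden]
    rcases abs_cases (1 - p - pstar) with ⟨h, _⟩ | ⟨h, _⟩ <;> rw [h] <;> nlinarith
  have hd : (p - pstar) * (1 - p - pstar) ≤ lam * (2 / (1 - s) * (pstar * (1 - pstar))) :=
    calc (p - pstar) * (1 - p - pstar) ≤ |(p - pstar) * (1 - p - pstar)| := le_abs_self _
      _ = |p - pstar| * |1 - p - pstar| := abs_mul _ _
      _ ≤ lam * (2 / (1 - s) * (pstar * (1 - pstar))) :=
          mul_le_mul hclose.le key (abs_nonneg _) hlam.le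
  nlinarith [mul_le_mul_of_nonneg_left hd hn, mul_pos hμ hlam]
end

section
/- Let η ∈ (0, 1/4) and set μ = 2/(1 − √(1 − 4η)). Then every real p* ∈ (0,1) with p*(1−p*) ≥ η satisfies μ·p*(1−p*) > |1 − 2p*|. -/
/-- if p* ∈ (0,1) satisfies p*(1-p*) ≥ η with 0 < η < 1/4,
then μ p*(1-p*) > |1 - 2p*| where μ = 2/(1 - √(1-4η)). -/
theorem mu_var_gt_abs (η : ℝ) (hη : η ∈ Set.Ioo (0 : ℝ) (1 / 4))
    (pstar : ℝ) (hps : pstar ∈ Set.Ioo (0 : ℝ) 1)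
    (hvar : η ≤ pstar * (1 - pstar)) :
    |1 - 2 * pstar| < 2 / (1 - Real.sqrt (1 - 4 * η)) * (pstar * (1 - pstar)) := by
  obtain ⟨hη0, hη4⟩ := hη
  obtain ⟨hp0, hp1⟩ := hps
  set s := Real.sqrt (1 - 4 * η) with hs
  have hsq : s * s = 1 - 4 * η := Real.mul_self_sqrt (by linarith)
  have hs0 : 0 < s := Real.sqrt_pos.mpr (by linarith)
  have hs1 : s < 1 := by
    nlinarith [hsq]
  have hden : 0 < 1 - s := by linarith
  rw [div_mul_eq_mul_div, lt_div_iff₀ hden]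
  have habs : |1 - 2 * pstar| ≤ s := by
    rw [abs_le]
    constructor <;> nlinarith [hsq]
  have ha0 : 0 ≤ |1 - 2 * pstar| := abs_nonneg _
  have ha1 : |1 - 2 * pstar| * |1 - 2 * pstar| = (1 - 2 * pstar) ^ 2 := by
    rw [← abs_mul, ← sq, abs_of_nonneg (sq_nonneg _)]
  nlinarith [sq_nonneg (1 - |1 - 2 * pstar|), mul_nonneg ha0 (sub_nonneg.mpr habs), ha1]
end

section
/- For every real q with 2 ≤ q < C, every real n ≥ 1, and every real p ∈ (0,1) such that n·p(1−p) ≤ r(q), the privacy budget estimate satisfies the lower bound ε(q,n,p) ≥ g₁(q) + g₂(q) + g₄(q) + g₅(q). -/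
/-- The channel-capacity constant C = (1 + min_k P^max_k h_k / ω₀)^{TW/d}. -/
noncomputable def Cval {ι : Type*} [Fintype ι] [Nonempty ι] (d : ℕ) (T W ω₀ : ℝ)
    (h Pmax : ι → ℝ) : ℝ :=
  (1 + Finset.univ.inf' Finset.univ_nonempty (fun k => Pmax k * h k / ω₀)) ^ (T * W / (d : ℝ))

/-- r(q) = (C - q)/4. -/
noncomputable def rfun {ι : Type*} [Fintype ι] [Nonempty ι] (d : ℕ) (T W ω₀ : ℝ)
    (h Pmax : ι → ℝ) (q : ℝ) : ℝ :=
  (Cval d T W ω₀ h Pmax - q) / 4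

noncomputable def g1 {ι : Type*} [Fintype ι] [Nonempty ι] (d : ℕ) (δ T W ω₀ : ℝ)
    (h Pmax : ι → ℝ) (q : ℝ) : ℝ :=
  Delta2 d δ q * Real.sqrt (2 * Real.log (1.25 / δ)) / Real.sqrt (rfun d T W ω₀ h Pmax q)

noncomputable def g2 {ι : Type*} [Fintype ι] [Nonempty ι] (d : ℕ) (δ T W ω₀ : ℝ)
    (h Pmax : ι → ℝ) (q : ℝ) : ℝ :=
  alphaC * Delta1 d δ q * (rfun d T W ω₀ h Pmax q + 1) /
    (2 * (1 - δ / 10) * (rfun d T W ω₀ h Pmax q) ^ 2)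

noncomputable def g3 {ι : Type*} [Fintype ι] [Nonempty ι] (d : ℕ) (δ T W ω₀ : ℝ)
    (h Pmax : ι → ℝ) (q : ℝ) : ℝ :=
  (Delta2 d δ q / Real.sqrt (1 - δ / 10)) *
    Real.sqrt (((rfun d T W ω₀ h Pmax q + 1) / (rfun d T W ω₀ h Pmax q) ^ 3) *
      Real.log (10 / δ))

noncomputable def g4 {ι : Type*} [Fintype ι] [Nonempty ι] (d : ℕ) (δ T W ω₀ : ℝ)
    (h Pmax : ι → ℝ) (q : ℝ) : ℝ :=
  (alphaC / 3) * Real.log (10 / δ) * DeltaInf q *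
    (Real.sqrt (2 * Real.log (20 * d / δ) / rfun d T W ω₀ h Pmax q) +
      (3 + Real.log (20 * d / δ)) / (3 * rfun d T W ω₀ h Pmax q)) ^ 2

noncomputable def g5 {ι : Type*} [Fintype ι] [Nonempty ι] (d : ℕ) (δ T W ω₀ : ℝ)
    (h Pmax : ι → ℝ) (q : ℝ) : ℝ :=
  2 * Real.log (1.25 / δ) * DeltaInf q / rfun d T W ω₀ h Pmax q

set_option maxHeartbeats 2000000

/-- the privacy budget estimate is bounded below by g₁ + g₂ + g₄ + g₅
whenever n p (1-p) ≤ r(q). -/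
theorem eps_lower_bound {ι : Type*} [Fintype ι] [Nonempty ι] (d : ℕ) (hd : 1 ≤ d)
    (δ : ℝ) (hδ : δ ∈ Set.Ioo (0 : ℝ) 1) (T W ω₀ : ℝ) (hT : 0 < T) (hW : 0 < W)
    (hω : 0 < ω₀) (h Pmax : ι → ℝ) (hh : ∀ k, 0 < h k) (hPmax : ∀ k, 0 < Pmax k)
    (q : ℝ) (hq : 2 ≤ q) (hqC : q < Cval d T W ω₀ h Pmax)
    (n : ℝ) (hn : 1 ≤ n) (p : ℝ) (hp : p ∈ Set.Ioo (0 : ℝ) 1)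
    (hnp : n * p * (1 - p) ≤ rfun d T W ω₀ h Pmax q) :
    g1 d δ T W ω₀ h Pmax q + g2 d δ T W ω₀ h Pmax q + g4 d δ T W ω₀ h Pmax q +
        g5 d δ T W ω₀ h Pmax q ≤ eps d δ q n p := by
  obtain ⟨hδ0, hδ1⟩ := hδ
  obtain ⟨hp0, hp1⟩ := hp
  have hn0 : (0:ℝ) < n := lt_of_lt_of_le one_pos hn
  have hp1' : (0:ℝ) < 1 - p := by linarith
  have hr : 0 < rfun d T W ω₀ h Pmax q := by unfold rfun; linarith
  have hd1 : (1:ℝ) ≤ d := by exact_mod_cast hd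
  have hα : 0 ≤ alphaC := by
    have := Real.log_le_sub_one_of_pos (by norm_num : (0:ℝ) < 2/3)
    unfold alphaC; linarith
  have hlog2 : 0 ≤ Real.log (2/δ) := Real.log_nonneg (by rw [le_div_iff₀ hδ0]; linarith)
  have hlog125 : 0 ≤ Real.log (1.25/δ) := Real.log_nonneg (by rw [le_div_iff₀ hδ0]; linarith)
  have hlog10 : 0 ≤ Real.log (10/δ) := Real.log_nonneg (by rw [le_div_iff₀ hδ0]; linarith)
  have hL0 : 0 ≤ Real.log (20*(d:ℝ)/δ) := Real.log_nonneg (by rw [le_div_iff₀ hδ0]; nlinarith)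
  have hΔ1 : 0 ≤ Delta1 d δ q := by
    unfold Delta1
    have h1 : 0 ≤ Real.sqrt d * (q-1) := mul_nonneg (Real.sqrt_nonneg _) (by linarith)
    have h2 := Real.sqrt_nonneg (2 * Real.sqrt d * (q - 1) * Real.log (2 / δ))
    linarith
  have hΔ2 : 0 ≤ Delta2 d δ q := by
    unfold Delta2
    have := Real.sqrt_nonneg (Delta1 d δ q +
      Real.sqrt (2 * Real.sqrt d * (q - 1) * Real.log (2 / δ)))
    linarith
  have hΔi : 0 ≤ DeltaInf q := by unfold DeltaInf; linarith
  have hδ10 : (0:ℝ) < 1 - δ/10 := by linarith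
  have hpf : (1:ℝ)/2 ≤ p^2 + (1-p)^2 := by nlinarith [sq_nonneg (2*p-1)]
  unfold eps g1 g2 g4 g5
  set r := rfun d T W ω₀ h Pmax q with hrdef
  set L := Real.log (20*(d:ℝ)/δ) with hLdef
  set m := n * p * (1 - p) with hmdef
  clear_value r L m
  have hm : 0 < m := by rw [hmdef]; exact mul_pos (mul_pos hn0 hp0) hp1'
  have hm2 : n^2*p^2*(1-p)^2 = m^2 := by rw [hmdef]; ring
  have hden : (0:ℝ) < n^2*p^2*(1-p)^2 := by
    rw [hm2]; exact pow_pos hm 2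
  -- term 1
  have h1 : Delta2 d δ q * Real.sqrt (2*Real.log (1.25/δ)) / Real.sqrt r ≤
      Delta2 d δ q * Real.sqrt (2*Real.log (1.25/δ)) / Real.sqrt m := by
    apply div_le_div_of_nonneg_left (mul_nonneg hΔ2 (Real.sqrt_nonneg _))
      (Real.sqrt_pos.mpr hm) (Real.sqrt_le_sqrt hnp)
  -- term 2
  have hcc : 0 ≤ alphaC * Delta1 d δ q * (1 - δ/10) :=
    mul_nonneg (mul_nonneg hα hΔ1) hδ10.le
  have key2 : (r+1)*m^2 ≤ (m+1)*r^2 := by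
    nlinarith [mul_nonneg (sub_nonneg.2 hnp)
      (add_nonneg (add_nonneg (mul_nonneg hr.le hm.le) hr.le) hm.le)]
  have h2 : alphaC * Delta1 d δ q * (r+1) / (2*(1-δ/10)*r^2) ≤
      alphaC * Delta1 d δ q * (m+1) * (p^2+(1-p)^2) / (n^2*p^2*(1-p)^2*(1-δ/10)) := by
    rw [div_le_div_iff₀ (mul_pos (by linarith) (pow_pos hr 2)) (mul_pos hden hδ10)]
    rw [hm2]
    have e1 := mul_le_mul_of_nonneg_left key2 hcc
    have e2 := mul_le_mul_of_nonneg_left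
      (show (1:ℝ) ≤ 2*(p^2+(1-p)^2) by linarith)
      (mul_nonneg hcc (mul_nonneg (by linarith : (0:ℝ) ≤ m+1) (sq_nonneg r)))
    linarith [e1, e2]
  -- term 3
  have h3 : 0 ≤ (Delta2 d δ q / Real.sqrt (1 - δ/10)) *
      Real.sqrt (2 * S1 n p * Real.log (10/δ)) :=
    mul_nonneg (div_nonneg hΔ2 (Real.sqrt_nonneg _)) (Real.sqrt_nonneg _)
  -- term 4
  set X := Real.sqrt (2*L/r) + (3+L)/(3*r) with hXdef
  clear_value X
  have hXnn : 0 ≤ X := by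
    rw [hXdef]
    exact add_nonneg (Real.sqrt_nonneg _)
      (div_nonneg (by linarith : (0:ℝ) ≤ 3+L) (by linarith : (0:ℝ) ≤ 3*r))
  have ha : m * Real.sqrt (2*L/r) ≤ Real.sqrt (2*n*p*(1-p)*L) := by
    rw [show m * Real.sqrt (2*L/r) = Real.sqrt (m^2 * (2*L/r)) from by
      rw [Real.sqrt_mul (sq_nonneg m), Real.sqrt_sq hm.le]]
    apply Real.sqrt_le_sqrt
    rw [show m^2 * (2*L/r) = 2*L*m^2/r from by ring, div_le_iff₀ hr]
    calc 2*L*m^2 ≤ 2*L*(m*r) := by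
          nlinarith [mul_nonneg (mul_nonneg hL0 hm.le) (sub_nonneg.2 hnp)]
      _ = 2*n*p*(1-p)*L*r := by rw [hmdef]; ring
  have hmax : (1:ℝ)/2 ≤ max p (1-p) := by
    rcases le_total p (1/2) with hc | hc
    · exact le_max_of_le_right (by linarith)
    · exact le_max_of_le_left hc
  have hb : m * ((3+L)/(3*r)) ≤ 1 + 2/3 * max p (1-p) * L := by
    have hb1 : m * ((3+L)/(3*r)) ≤ (3+L)/3 := by
      rw [show m * ((3+L)/(3*r)) = m*(3+L)/(3*r) from by ring,
        div_le_div_iff₀ (by linarith) (by norm_num)]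
      nlinarith [mul_nonneg (by linarith : (0:ℝ) ≤ 3+L) (sub_nonneg.2 hnp)]
    have hb2 : (3+L)/3 ≤ 1 + 2/3 * max p (1-p) * L := by
      have := mul_le_mul_of_nonneg_right hmax hL0
      linarith
    linarith
  have hX : m * X ≤ Real.sqrt (2*n*p*(1-p)*L) + 1 + 2/3 * max p (1-p) * L := by
    rw [hXdef, mul_add]
    linarith [ha, hb]
  have hXm : (m*X)^2 ≤ S2 d δ n p := by
    unfold S2
    rw [← hLdef]
    exact pow_le_pow_left₀ (mul_nonneg hm.le hXnn) (by linarith [hX]) 2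
  have hS2nn : 0 ≤ S2 d δ n p := le_trans (sq_nonneg _) hXm
  have hc4 : 0 ≤ alphaC * Real.log (10/δ) * DeltaInf q :=
    mul_nonneg (mul_nonneg hα hlog10) hΔi
  have h4 : alphaC / 3 * Real.log (10/δ) * DeltaInf q * X^2 ≤
      2/3 * alphaC * S2 d δ n p * (p^2+(1-p)^2) * Real.log (10/δ) * DeltaInf q /
        (n^2*p^2*(1-p)^2) := by
    rw [le_div_iff₀ hden, hm2]
    have e1 := mul_le_mul_of_nonneg_left hXm hc4
    have e2 := mul_le_mul_of_nonneg_left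
      (show (1:ℝ) ≤ 2*(p^2+(1-p)^2) by linarith)
      (mul_nonneg hc4 hS2nn)
    linarith [e1, e2]
  -- term 5
  have h5 : 2 * Real.log (1.25/δ) * DeltaInf q / r ≤
      2 * Real.log (1.25/δ) * DeltaInf q / m := by
    exact div_le_div_of_nonneg_left (mul_nonneg (mul_nonneg (by norm_num) hlog125) hΔi) hm hnp
  linarith [h1, h2, h3, h4, h5]
end
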